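/- arXiv:2506.06492 — 4 statements merged into one kernel-verified Lean document; each statement's English description precedes it below -/
import Mathlib

section
/- Let φ be a flow on ℝ^d and let N₁, N₂ ⊆ ℝ^d be attracting neighborhoods for φ. Then ω(N₁ ∩ N₂) = ω(N₁) ∩ ω(N₂). -/
open Set

/-- A flow on `ℝ^d`: a continuous map `φ : ℝ × ℝ^d → ℝ^d` with `φ 0 x = x`
and `φ t (φ s x) = φ (t+s) x`. -/
def IsFlow {d : ℕ} (φ : ℝ → EuclideanSpace ℝ (Fin d) → EuclideanSpace ℝ (Fin d)) : Prop :=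
  Continuous (Function.uncurry φ) ∧ (∀ x, φ 0 x = x) ∧
    ∀ t s x, φ t (φ s x) = φ (t + s) x

/-- `N` is an attracting neighborhood for the flow `φ`: `N` is compact and there is
`τ > 0` such that `φ(t,N) ⊆ interior N` for all `t ≥ τ`. -/
def AttractingNbhd {d : ℕ} (φ : ℝ → EuclideanSpace ℝ (Fin d) → EuclideanSpace ℝ (Fin d))
    (N : Set (EuclideanSpace ℝ (Fin d))) : Prop :=
  IsCompact N ∧ ∃ τ : ℝ, 0 < τ ∧ ∀ t : ℝ, τ ≤ t → (φ t) '' N ⊆ interior N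

/-- The omega-limit set `ω(S) = ⋂_{t>0} closure (⋃_{s ≥ t} φ(s,S))`. -/
def omegaLimitSet {d : ℕ} (φ : ℝ → EuclideanSpace ℝ (Fin d) → EuclideanSpace ℝ (Fin d))
    (S : Set (EuclideanSpace ℝ (Fin d))) : Set (EuclideanSpace ℝ (Fin d)) :=
  ⋂ t ∈ Set.Ioi (0 : ℝ), closure (⋃ s ∈ Set.Ici t, (φ s) '' S)

lemma omega_mono {d : ℕ} (φ : ℝ → EuclideanSpace ℝ (Fin d) → EuclideanSpace ℝ (Fin d))
    {S T : Set (EuclideanSpace ℝ (Fin d))} (h : S ⊆ T) :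
    omegaLimitSet φ S ⊆ omegaLimitSet φ T := by
  apply iInter₂_mono
  intro t ht
  apply closure_mono
  exact iUnion₂_mono fun s hs => image_mono h

lemma omega_subset_self {d : ℕ} (φ : ℝ → EuclideanSpace ℝ (Fin d) → EuclideanSpace ℝ (Fin d))
    {N : Set (EuclideanSpace ℝ (Fin d))} (hN : AttractingNbhd φ N) :
    omegaLimitSet φ N ⊆ N := by
  obtain ⟨hc, τ, hτ, hattr⟩ := hN
  intro x hx
  have hx' : x ∈ closure (⋃ s ∈ Set.Ici τ, (φ s) '' N) := by
    have := Set.mem_iInter₂.1 hx τ hτ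
    exact this
  have hsub : (⋃ s ∈ Set.Ici τ, (φ s) '' N) ⊆ N := by
    intro y hy
    obtain ⟨s, hs, hy⟩ := Set.mem_iUnion₂.1 hy
    exact interior_subset (hattr s hs hy)
  have := closure_mono hsub hx'
  rwa [hc.isClosed.closure_eq] at this

lemma omega_inv {d : ℕ} {φ : ℝ → EuclideanSpace ℝ (Fin d) → EuclideanSpace ℝ (Fin d)}
    (hφ : IsFlow φ) (N : Set (EuclideanSpace ℝ (Fin d))) (r : ℝ)
    {x : EuclideanSpace ℝ (Fin d)} (hx : x ∈ omegaLimitSet φ N) :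
    φ r x ∈ omegaLimitSet φ N := by
  obtain ⟨hc, h0, hadd⟩ := hφ
  have hcont : Continuous (φ r) :=
    hc.comp (continuous_const.prodMk continuous_id)
  refine Set.mem_iInter₂.2 fun t ht => ?_
  set t₀ : ℝ := max (t - r) 1 with ht₀def
  have ht₀ : (0:ℝ) < t₀ := lt_of_lt_of_le one_pos (le_max_right _ _)
  have hx' : x ∈ closure (⋃ s ∈ Set.Ici t₀, (φ s) '' N) := Set.mem_iInter₂.1 hx t₀ ht₀
  have h1 : φ r x ∈ closure ((φ r) '' ⋃ s ∈ Set.Ici t₀, (φ s) '' N) :=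
    image_closure_subset_closure_image hcont (Set.mem_image_of_mem _ hx')
  refine closure_mono ?_ h1
  rintro y ⟨z, hz, rfl⟩
  obtain ⟨s, hs, w, hw, rfl⟩ := Set.mem_iUnion₂.1 hz
  refine Set.mem_iUnion₂.2 ⟨r + s, ?_, w, hw, ?_⟩
  · have : t - r ≤ s := le_trans (le_max_left _ _) hs
    simp only [Set.mem_Ici]; linarith
  · exact (hadd r s w).symm

theorem stmt_5 {d : ℕ} (φ : ℝ → EuclideanSpace ℝ (Fin d) → EuclideanSpace ℝ (Fin d))
    (hφ : IsFlow φ) (N₁ N₂ : Set (EuclideanSpace ℝ (Fin d)))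
    (h₁ : AttractingNbhd φ N₁) (h₂ : AttractingNbhd φ N₂) :
    omegaLimitSet φ (N₁ ∩ N₂) = omegaLimitSet φ N₁ ∩ omegaLimitSet φ N₂ := by
  apply Set.Subset.antisymm
  · exact subset_inter (omega_mono φ inter_subset_left) (omega_mono φ inter_subset_right)
  · rintro x ⟨hx1, hx2⟩
    refine Set.mem_iInter₂.2 fun t ht => ?_
    apply subset_closure
    have hy1 : φ (-t) x ∈ N₁ := omega_subset_self φ h₁ (omega_inv hφ N₁ (-t) hx1)
    have hy2 : φ (-t) x ∈ N₂ := omega_subset_self φ h₂ (omega_inv hφ N₂ (-t) hx2)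
    refine Set.mem_iUnion₂.2 ⟨t, le_refl t, φ (-t) x, ⟨hy1, hy2⟩, ?_⟩
    rw [hφ.2.2, add_neg_cancel, hφ.2.1]
end

section
/- Let φ be a flow on ℝ^d, let N ⊆ ℝ^d be an attracting neighborhood for φ, and let x ∈ ℝ^d. If ω(x) ∩ ω(N) ≠ ∅, then ω(x) ⊆ ω(N). -/
open Set

theorem stmt_8 {d : ℕ} (φ : ℝ → EuclideanSpace ℝ (Fin d) → EuclideanSpace ℝ (Fin d))
    (hφ : IsFlow φ) (N : Set (EuclideanSpace ℝ (Fin d))) (hAN : AttractingNbhd φ N)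
    (x : EuclideanSpace ℝ (Fin d))
    (hx : (omegaLimitSet φ {x} ∩ omegaLimitSet φ N).Nonempty) :
    omegaLimitSet φ {x} ⊆ omegaLimitSet φ N := by
  obtain ⟨hcont, hzero, hcomp⟩ := hφ
  obtain ⟨hN, τ, hτ, hattr⟩ := hAN
  obtain ⟨p, hpx, hpN⟩ := hx
  have hct : ∀ t : ℝ, Continuous (φ t) := fun t =>
    hcont.comp (continuous_const.prodMk continuous_id)
  -- closure of the τ-tail of N's orbit is in N
  have hsub1 : closure (⋃ s ∈ Set.Ici τ, φ s '' N) ⊆ N := by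
    apply closure_minimal _ hN.isClosed
    intro y hy
    simp only [mem_iUnion, exists_prop] at hy
    obtain ⟨s, hs, hy⟩ := hy
    exact interior_subset (hattr s hs hy)
  -- ω(N) ⊆ interior N
  have hωN : omegaLimitSet φ N ⊆ interior N := by
    intro y hy
    have hy2 : y ∈ closure (⋃ s ∈ Set.Ici (2 * τ), φ s '' N) :=
      mem_iInter₂.mp hy (2 * τ) (by simpa using by positivity)
    have key : φ (-τ) y ∈ closure (⋃ s ∈ Set.Ici τ, φ s '' N) := by
      have h1 : φ (-τ) y ∈ closure (φ (-τ) '' ⋃ s ∈ Set.Ici (2 * τ), φ s '' N) :=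
        image_closure_subset_closure_image (hct (-τ)) ⟨y, hy2, rfl⟩
      refine closure_mono ?_ h1
      rintro z ⟨w, hw, rfl⟩
      simp only [mem_iUnion, exists_prop] at hw ⊢
      obtain ⟨s, hs, v, hv, rfl⟩ := hw
      exact ⟨-τ + s, mem_Ici.mpr (by have := mem_Ici.mp hs; linarith), v, hv, (hcomp (-τ) s v).symm⟩
    have hmem : φ (-τ) y ∈ N := hsub1 key
    have : φ τ (φ (-τ) y) = y := by
      rw [hcomp, add_neg_cancel, hzero]
    exact this ▸ hattr τ le_rfl ⟨φ (-τ) y, hmem, rfl⟩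
  -- find t₀ ≥ 1 with φ t₀ x ∈ N
  have hp1 : p ∈ closure (⋃ s ∈ Set.Ici (1 : ℝ), φ s '' {x}) :=
    mem_iInter₂.mp hpx 1 (by norm_num)
  obtain ⟨q, hqN, hq⟩ := mem_closure_iff.mp hp1 (interior N) isOpen_interior (hωN hpN)
  simp only [mem_iUnion, exists_prop, image_singleton, mem_singleton_iff] at hq
  obtain ⟨t₀, ht₀, rfl⟩ := hq
  have hxN : φ t₀ x ∈ N := interior_subset hqN
  -- main inclusion
  intro y hy
  rw [omegaLimitSet, mem_iInter₂]
  intro t ht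
  have hy2 : y ∈ closure (⋃ s ∈ Set.Ici (t₀ + t), φ s '' {x}) :=
    mem_iInter₂.mp hy (t₀ + t) (by simp only [mem_Ioi] at ht ⊢; have := mem_Ici.mp ht₀; linarith)
  refine closure_mono ?_ hy2
  intro z hz
  simp only [mem_iUnion, exists_prop, image_singleton, mem_singleton_iff] at hz
  obtain ⟨s, hs, rfl⟩ := hz
  simp only [mem_iUnion, exists_prop]
  refine ⟨s - t₀, mem_Ici.mpr (by have h1 := mem_Ici.mp hs; have h2 := mem_Ioi.mp ht; linarith), φ t₀ x, hxN, ?_⟩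
  rw [hcomp, sub_add_cancel]
end

section
/- Let φ be a flow on ℝ^d, let N ⊆ ℝ^d be an attracting neighborhood for φ, and let x ∈ ℝ^d. If the alpha-limit set α(x) is nonempty and α(x) ⊆ ω(N), then ω(x) ⊆ ω(N). -/
open Set

/-- The alpha-limit set `α(x) = ⋂_{t>0} closure {φ(s,x) : s ≤ -t}`. -/
def alphaLimitSet {d : ℕ} (φ : ℝ → EuclideanSpace ℝ (Fin d) → EuclideanSpace ℝ (Fin d))
    (x : EuclideanSpace ℝ (Fin d)) : Set (EuclideanSpace ℝ (Fin d)) :=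
  ⋂ t ∈ Set.Ioi (0 : ℝ), closure ((fun s : ℝ => φ s x) '' Set.Iic (-t))

theorem stmt_9 {d : ℕ} (φ : ℝ → EuclideanSpace ℝ (Fin d) → EuclideanSpace ℝ (Fin d))
    (hφ : IsFlow φ) (N : Set (EuclideanSpace ℝ (Fin d))) (hAN : AttractingNbhd φ N)
    (x : EuclideanSpace ℝ (Fin d)) (hne : (alphaLimitSet φ x).Nonempty)
    (hsub : alphaLimitSet φ x ⊆ omegaLimitSet φ N) :
    omegaLimitSet φ {x} ⊆ omegaLimitSet φ N := by
  obtain ⟨hcont, hzero, hlaw⟩ := hφ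
  obtain ⟨hN, τ, hτ, hmap⟩ := hAN
  -- continuity of each time-t map
  have hct : ∀ t : ℝ, Continuous (φ t) := fun t =>
    hcont.comp (Continuous.prodMk_right t)
  -- Step 1: ω(N) ⊆ interior N
  have hωint : omegaLimitSet φ N ⊆ interior N := by
    intro y hy
    have hy2 : y ∈ closure (⋃ s ∈ Set.Ici (2*τ), (φ s) '' N) := by
      have := Set.mem_iInter₂.mp hy (2*τ) (by simp [Set.mem_Ioi]; linarith)
      exact this
    have hsub2 : (⋃ s ∈ Set.Ici (2*τ), (φ s) '' N) ⊆ (φ τ) '' N := by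
      rintro z hz
      simp only [Set.mem_iUnion, Set.mem_Ici] at hz
      obtain ⟨s, hs, w, hw, rfl⟩ := hz
      have h1 : φ (s - τ) w ∈ N :=
        interior_subset (hmap (s - τ) (by linarith) ⟨w, hw, rfl⟩)
      refine ⟨φ (s - τ) w, h1, ?_⟩
      rw [hlaw]
      congr 1; ring
    have hclosed : IsClosed ((φ τ) '' N) := (hN.image (hct τ)).isClosed
    have : y ∈ (φ τ) '' N := hclosed.closure_subset_iff.mpr hsub2 hy2
    exact hmap τ le_rfl this
  -- Step 2: find s₀ ≤ -1 with φ s₀ x ∈ N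
  obtain ⟨p, hp⟩ := hne
  have hpint : p ∈ interior N := hωint (hsub hp)
  have hp1 : p ∈ closure ((fun s : ℝ => φ s x) '' Set.Iic (-1)) :=
    Set.mem_iInter₂.mp hp 1 (by norm_num)
  obtain ⟨q, hqint, hqmem⟩ :=
    mem_closure_iff.mp hp1 (interior N) isOpen_interior hpint
  obtain ⟨s₀, hs₀, rfl⟩ := hqmem
  have hs₀N : φ s₀ x ∈ N := interior_subset hqint
  have hs₀le : s₀ ≤ -1 := hs₀
  -- Step 3: ω(x) ⊆ ω(N)
  intro y hy
  refine Set.mem_iInter₂.mpr fun t ht => ?_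
  have hy' : y ∈ closure (⋃ s ∈ Set.Ici t, (φ s) '' ({x} : Set _)) :=
    Set.mem_iInter₂.mp hy t ht
  refine closure_mono ?_ hy'
  rintro z hz
  simp only [Set.mem_iUnion, Set.mem_Ici, Set.image_singleton, Set.mem_singleton_iff] at hz
  obtain ⟨s, hs, rfl⟩ := hz
  simp only [Set.mem_iUnion, Set.mem_Ici]
  refine ⟨s - s₀, by linarith, φ s₀ x, hs₀N, ?_⟩
  rw [hlaw]
  congr 1; ring
end

section
/- Let φ be a flow on ℝ^d, let X ⊆ ℝ^d be a compact attracting neighborhood for φ, and let N₀, …, N_K ⊆ X be attracting neighborhoods with A_k := ω(N_k). Then the set M := {x ∈ ω(X) : ω(x) ∩ A_k = ∅ for all k = 0, …, K} is compact, and M is disjoint from every A_k. -/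
open Set

theorem stmt_16 {d : ℕ} (φ : ℝ → EuclideanSpace ℝ (Fin d) → EuclideanSpace ℝ (Fin d))
    (hφ : IsFlow φ) (X : Set (EuclideanSpace ℝ (Fin d))) (hX : AttractingNbhd φ X)
    (K : ℕ) (N : Fin (K + 1) → Set (EuclideanSpace ℝ (Fin d)))
    (hNX : ∀ k, N k ⊆ X)
    (hAN : ∀ k, AttractingNbhd φ (N k))
    (A : Fin (K + 1) → Set (EuclideanSpace ℝ (Fin d)))
    (hA : ∀ k, A k = omegaLimitSet φ (N k))
    (M : Set (EuclideanSpace ℝ (Fin d)))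
    (hM : M = {x ∈ omegaLimitSet φ X | ∀ k, omegaLimitSet φ {x} ∩ A k = ∅}) :
    IsCompact M ∧ ∀ k, Disjoint M (A k) := by
  obtain ⟨hcont, h0, hgrp⟩ := hφ
  have hφc : ∀ t : ℝ, Continuous (φ t) := fun t =>
    hcont.comp (Continuous.prodMk_right t)
  -- Step 1 : ω(N') ⊆ interior N' for any attracting nbhd N'
  have hAsub : ∀ (N' : Set (EuclideanSpace ℝ (Fin d))), IsCompact N' →
      ∀ τ : ℝ, 0 < τ → (∀ t : ℝ, τ ≤ t → (φ t) '' N' ⊆ interior N') →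
      omegaLimitSet φ N' ⊆ interior N' := by
    intro N' hNc τ hτ hattr
    have h1 : omegaLimitSet φ N' ⊆ closure (⋃ s ∈ Set.Ici (2*τ), (φ s) '' N') := by
      intro x hx
      have := Set.mem_iInter₂.1 hx (2*τ) (by simp [Set.mem_Ioi]; linarith)
      exact this
    have h2 : (⋃ s ∈ Set.Ici (2*τ), (φ s) '' N') ⊆ (φ τ) '' N' := by
      rintro y hy
      simp only [Set.mem_iUnion, Set.mem_Ici] at hy
      obtain ⟨s, hs, z, hz, rfl⟩ := hy
      have hmem : φ (s - τ) z ∈ interior N' :=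
        hattr (s - τ) (by linarith) ⟨z, hz, rfl⟩
      refine ⟨φ (s - τ) z, interior_subset hmem, ?_⟩
      rw [hgrp]; ring_nf
    have h3 : IsClosed ((φ τ) '' N') := (hNc.image (hφc τ)).isClosed
    intro x hx
    exact hattr τ le_rfl (h3.closure_subset_iff.2 h2 (h1 hx))
  -- monotonicity-type: tail of a point inside N' is in ω(N')
  -- Step 2 : characterization of M
  have hMchar : M = omegaLimitSet φ X ∩
      ⋂ k, {x | ∀ t : ℝ, 0 ≤ t → φ t x ∉ interior (N k)} := by
    rw [hM]; ext x
    simp only [Set.mem_sep_iff, Set.mem_inter_iff, Set.mem_iInter, Set.mem_setOf_eq]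
    refine and_congr_right fun hxω => ⟨?_, ?_⟩
    · -- if ω(x) ∩ A k = ∅ then orbit never enters interior (N k)
      intro hcond k t ht hmem
      obtain ⟨hNk, τ, hτ, hattr⟩ := hAN k
      set y := φ t x with hy
      have hyN : y ∈ N k := interior_subset hmem
      -- the forward orbit of x after time t + τ lies in N k
      have horb : ∀ s : ℝ, t + τ ≤ s → φ s x ∈ N k := by
        intro s hs
        have : φ s x = φ (s - t) y := by rw [hy, hgrp]; ring_nf
        rw [this]
        exact interior_subset (hattr (s - t) (by linarith) ⟨y, hyN, rfl⟩)
      -- ω(x) ⊆ A k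
      have hsub : omegaLimitSet φ {x} ⊆ A k := by
        rw [hA k]
        intro z hz
        apply Set.mem_iInter₂.2
        intro u hu
        have hu0 : (0:ℝ) < u := hu
        have hz' := Set.mem_iInter₂.1 hz (u + t) (by simp [Set.mem_Ioi]; linarith)
        refine closure_mono ?_ hz'
        rintro w hw
        simp only [Set.mem_iUnion, Set.mem_Ici, Set.image_singleton,
          Set.mem_singleton_iff] at hw ⊢
        obtain ⟨s, hs, rfl⟩ := hw
        refine ⟨s - t, by linarith, y, hyN, ?_⟩
        rw [hy, hgrp]; ring_nf
      -- ω(x) nonempty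
      have hne : (omegaLimitSet φ {x}).Nonempty := by
        set C : ℕ → Set (EuclideanSpace ℝ (Fin d)) :=
          fun n => closure (⋃ s ∈ Set.Ici (t + τ + n), (φ s) '' {x}) with hC
        have htail : ∀ n : ℕ, (⋃ s ∈ Set.Ici (t + τ + (n:ℝ)), (φ s) '' {x}) ⊆ N k := by
          intro n w hw
          simp only [Set.mem_iUnion, Set.mem_Ici, Set.image_singleton,
            Set.mem_singleton_iff] at hw
          obtain ⟨s, hs, rfl⟩ := hw
          exact horb s (by have : (0:ℝ) ≤ n := n.cast_nonneg; linarith)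
        have hCN : ∀ n, C n ⊆ N k := fun n =>
          (hNk.isClosed.closure_subset_iff).2 (htail n)
        have hCne : ∀ n, (C n).Nonempty := by
          intro n
          refine ⟨φ (t + τ + n) x, subset_closure ?_⟩
          simp only [Set.mem_iUnion, Set.mem_Ici, Set.image_singleton,
            Set.mem_singleton_iff]
          exact ⟨t + τ + n, le_rfl, rfl⟩
        have hCmono : ∀ n, C (n + 1) ⊆ C n := by
          intro n
          apply closure_mono
          apply Set.biUnion_subset_biUnion_left
          intro s hs
          simp only [Set.mem_Ici] at hs ⊢
          push_cast at hs ⊢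
          linarith
        have hint : (⋂ n, C n).Nonempty :=
          IsCompact.nonempty_iInter_of_sequence_nonempty_isCompact_isClosed C
            hCmono hCne (hNk.of_isClosed_subset isClosed_closure (hCN 0))
            (fun n => isClosed_closure)
        obtain ⟨z, hz⟩ := hint
        refine ⟨z, Set.mem_iInter₂.2 fun u hu => ?_⟩
        obtain ⟨n, hn⟩ := exists_nat_ge u
        have := Set.mem_iInter.1 hz n
        refine closure_mono ?_ this
        apply Set.biUnion_subset_biUnion_left
        intro s hs
        simp only [Set.mem_Ici] at hs ⊢
        linarith
      obtain ⟨z, hz⟩ := hne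
      have : z ∈ omegaLimitSet φ {x} ∩ A k := ⟨hz, hsub hz⟩
      rw [hcond k] at this
      exact this
    · -- if orbit avoids interior (N k) then ω(x) ∩ A k = ∅
      intro hcond k
      have hAk : A k ⊆ interior (N k) := by
        rw [hA k]
        obtain ⟨hNk, τ, hτ, hattr⟩ := hAN k
        exact hAsub (N k) hNk τ hτ hattr
      have hωx : omegaLimitSet φ {x} ⊆ (interior (N k))ᶜ := by
        intro z hz
        have hz' := Set.mem_iInter₂.1 hz 1 (by norm_num)
        have hsub2 : (⋃ s ∈ Set.Ici (1:ℝ), (φ s) '' {x}) ⊆ (interior (N k))ᶜ := by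
          rintro w hw
          simp only [Set.mem_iUnion, Set.mem_Ici, Set.image_singleton,
            Set.mem_singleton_iff] at hw
          obtain ⟨s, hs, rfl⟩ := hw
          exact hcond k s (by linarith)
        exact (isOpen_interior.isClosed_compl.closure_subset_iff).2 hsub2 hz'
      apply Set.eq_empty_of_forall_notMem
      rintro z ⟨hz1, hz2⟩
      exact hωx hz1 (hAk hz2)
  -- Step 3 : conclusions
  constructor
  · -- compactness
    obtain ⟨hXc, τ, hτ, hattr⟩ := hX
    have hMX : M ⊆ X := by
      rw [hMchar]
      intro x hx
      exact interior_subset (hAsub X hXc τ hτ hattr hx.1)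
    have hMcl : IsClosed M := by
      rw [hMchar]
      apply IsClosed.inter
      · exact isClosed_biInter fun t ht => isClosed_closure
      · apply isClosed_iInter
        intro k
        have : {x | ∀ t : ℝ, 0 ≤ t → φ t x ∉ interior (N k)} =
            ⋂ t ∈ Set.Ici (0:ℝ), (φ t) ⁻¹' (interior (N k))ᶜ := by
          ext x; simp [Set.mem_Ici]
        rw [this]
        exact isClosed_biInter fun t ht =>
          (isOpen_interior.isClosed_compl).preimage (hφc t)
    exact hXc.of_isClosed_subset hMcl hMX
  · -- disjointness
    intro k
    rw [Set.disjoint_left, hMchar]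
    rintro x ⟨hx1, hx2⟩ hxA
    have hAk : A k ⊆ interior (N k) := by
      rw [hA k]
      obtain ⟨hNk, τ, hτ, hattr⟩ := hAN k
      exact hAsub (N k) hNk τ hτ hattr
    have h00 : φ 0 x ∉ interior (N k) := (Set.mem_iInter.1 hx2 k) 0 le_rfl
    rw [h0 x] at h00
    exact h00 (hAk hxA)
end
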